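/- arXiv:2408.07693 — 3 statements merged into one kernel-verified Lean document; each statement's English description precedes it below -/
import Mathlib

section
/- (Finite-dimensional McKean–Singer theorem.) Let V be a finite-dimensional complex inner product space with an orthogonal decomposition V = V₀ ⊕ V₁ (V₁ the orthogonal complement of V₀), and let ε : V → V be the grading operator equal to the identity on V₀ and minus the identity on V₁. Let Q : V → V be a self-adjoint linear map that is odd, meaning Q(V₀) ⊆ V₁ and Q(V₁) ⊆ V₀. Then for every real number t, trace(ε ∘ exp(−t • Q²)) = dim(ker Q ∩ V₀) − dim(ker Q ∩ V₁). In particular, the super trace of the heat semigroup e^{−tQ²} is independent of t. -/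
/-!
Write `str A = tr (ε A)` and `V₁ = V₀ᗮ`. If `A` anticommutes with `ε`, cyclicity of the trace
gives `str (A Y + Y A) = 0`. Since `Q` is odd and commutes with `exp (s Q²)`, this kills
`str (exp (s Q²) Q²)`, the derivative of `s ↦ str (exp (s Q²))`, so the heat super trace equals
its value `str 1 = dim V₀ - dim V₁` at `s = 0`. Finally, a symmetric `Q` is injective on its range
and swaps `V₀` and `V₁`, so `Q V₀` and `Q V₁` have the same dimension, and rank–nullity on each
summand turns `dim V₀ - dim V₁` into `dim (ker Q ∩ V₀) - dim (ker Q ∩ V₁)`.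
-/

open Module LinearMap

section Trace

variable {R M : Type*} [CommRing R] [AddCommGroup M] [Module R M]

theorem LinearMap.trace_mul_add_mul_eq_zero_of_mul_eq_neg_mul {ε A : Module.End R M}
    (hA : A * ε = -(ε * A)) (Y : Module.End R M) :
    trace R M (ε * (A * Y + Y * A)) = 0 := by
  have h : trace R M (ε * (Y * A)) = -trace R M (ε * (A * Y)) := by
    rw [← mul_assoc, trace_mul_comm, ← mul_assoc, hA, neg_mul, map_neg, mul_assoc]
  rw [mul_add, map_add, h, add_neg_cancel]

theorem LinearMap.trace_mul_mul_mul_self_eq_zero [NoZeroDivisors R] [CharZero R]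
    {ε A B : Module.End R M} (hA : A * ε = -(ε * A)) (hAB : Commute A B) :
    trace R M (ε * (B * (A * A))) = 0 := by
  have h := trace_mul_add_mul_eq_zero_of_mul_eq_neg_mul hA (B * A)
  rw [← mul_assoc A B A, hAB.eq, mul_assoc, ← two_smul R, mul_smul_comm, map_smul, smul_eq_mul]
    at h
  exact (mul_eq_zero.mp h).resolve_left two_ne_zero

end Trace

theorem LinearMap.trace_eq_finrank_sub_finrank_of_isCompl {K V : Type*} [Field K]
    [AddCommGroup V] [Module K V] [FiniteDimensional K V] {p q : Submodule K V}
    (hpq : IsCompl p q) {ε : V →ₗ[K] V} (hp : ∀ x ∈ p, ε x = x) (hq : ∀ x ∈ q, ε x = -x) :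
    trace K V ε = finrank K p - finrank K q := by
  have : ε = (p.prodEquivOfIsCompl q hpq).conj (prodMap id (-id)) := by
    refine ext_on_codisjoint hpq.codisjoint (fun x (hx : x ∈ p) => ?_) (fun x (hx : x ∈ q) => ?_)
    · simp [LinearEquiv.conj_apply, hp x hx, Submodule.projection_apply_of_mem_left hpq hx, hx]
    · simp [LinearEquiv.conj_apply, hq x hx, Submodule.projection_apply_of_mem_left hpq.symm hx, hx]
  rw [this, trace_conj', trace_prodMap', trace_id, map_neg, trace_id, sub_eq_add_neg]

section Rank

variable {K V W : Type*} [Field K] [AddCommGroup V] [Module K V] [FiniteDimensional K V]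
  [AddCommGroup W] [Module K W]

theorem Submodule.finrank_eq_finrank_ker_inf_add_finrank_map (f : V →ₗ[K] W)
    (p : Submodule K V) :
    finrank K p = finrank K (ker f ⊓ p : Submodule K V) + finrank K (p.map f) := by
  have hker : (ker f).comap p.subtype = (ker f ⊓ p).comap p.subtype := by
    rw [Submodule.comap_inf, Submodule.comap_subtype_self, inf_top_eq]
  have h := (f.domRestrict p).finrank_range_add_finrank_ker
  rw [range_domRestrict, ker_domRestrict, hker,
    (Submodule.comapSubtypeEquivOfLe inf_le_right).finrank_eq] at h
  omega

theorem Submodule.finrank_map_eq_of_disjoint_ker {f : V →ₗ[K] W} {p : Submodule K V}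
    (h : Disjoint (ker f) p) : finrank K (p.map f) = finrank K p := by
  rw [p.finrank_eq_finrank_ker_inf_add_finrank_map f, h.eq_bot, finrank_bot, zero_add]

theorem LinearMap.finrank_sub_finrank_eq_of_mapsTo_of_mapsTo {f : V →ₗ[K] V}
    (hf : Disjoint (ker f) (range f)) {p q : Submodule K V}
    (hpq : ∀ x ∈ p, f x ∈ q) (hqp : ∀ x ∈ q, f x ∈ p) :
    (finrank K p : ℤ) - finrank K q
      = finrank K (ker f ⊓ p : Submodule K V) - finrank K (ker f ⊓ q : Submodule K V) := by
  have finrank_map_mono : ∀ {p q : Submodule K V}, (∀ x ∈ p, f x ∈ q) →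
      finrank K (p.map f) ≤ finrank K (q.map f) := fun {p q} h =>
    calc finrank K (p.map f) = finrank K ((p.map f).map f) :=
          (Submodule.finrank_map_eq_of_disjoint_ker (hf.mono_right map_le_range)).symm
      _ ≤ finrank K (q.map f) :=
          Submodule.finrank_mono (Submodule.map_mono (Submodule.map_le_iff_le_comap.mpr h))
  have := p.finrank_eq_finrank_ker_inf_add_finrank_map f
  have := q.finrank_eq_finrank_ker_inf_add_finrank_map f
  have := finrank_map_mono hpq
  have := finrank_map_mono hqp
  omega

end Rank

theorem LinearMap.IsSymmetric.disjoint_ker_range {𝕜 E : Type*} [RCLike 𝕜] [NormedAddCommGroup E]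
    [InnerProductSpace 𝕜 E] {T : E →ₗ[𝕜] E} (hT : T.IsSymmetric) :
    Disjoint (ker T) (range T) :=
  hT.orthogonal_range ▸ (range T).orthogonal_disjoint.symm

theorem LinearMap.mul_eq_neg_mul_of_codisjoint {R M : Type*} [Ring R] [AddCommGroup M]
    [Module R M] {p q : Submodule R M} (hpq : Codisjoint p q) {ε f : Module.End R M}
    (hεp : ∀ x ∈ p, ε x = x) (hεq : ∀ x ∈ q, ε x = -x)
    (hfp : ∀ x ∈ p, f x ∈ q) (hfq : ∀ x ∈ q, f x ∈ p) :
    f * ε = -(ε * f) :=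
  ext_on_codisjoint hpq (fun x (hx : x ∈ p) => by simp [hεp x hx, hεq _ (hfp x hx)])
    (fun x (hx : x ∈ q) => by simp [hεq x hx, hεp _ (hfq x hx)])

theorem ContinuousLinearMap.apply_exp_smul_eq_apply_one {𝕂 𝔸 F : Type*} [RCLike 𝕂] [NormedRing 𝔸]
    [NormedAlgebra 𝕂 𝔸] [CompleteSpace 𝔸] [NormedAddCommGroup F] [NormedSpace 𝕂 F]
    (φ : 𝔸 →L[𝕂] F) {H : 𝔸} (hφ : ∀ s : 𝕂, φ (NormedSpace.exp (s • H) * H) = 0) (t : 𝕂) :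
    φ (NormedSpace.exp (t • H)) = φ 1 := by
  have hderiv (s : 𝕂) : HasDerivAt (fun u : 𝕂 => φ (NormedSpace.exp (u • H))) 0 s :=
    hφ s ▸ φ.hasFDerivAt.comp_hasDerivAt s (hasDerivAt_exp_smul_const H s)
  simpa using is_const_of_deriv_eq_zero (fun s => (hderiv s).differentiableAt)
    (fun s => (hderiv s).deriv) t 0

theorem ContinuousLinearMap.trace_comp_exp_smul_mul_self {𝕜 V : Type*} [RCLike 𝕜]
    [NormedAddCommGroup V] [NormedSpace 𝕜 V] [FiniteDimensional 𝕜 V] {ε Q : V →L[𝕜] V}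
    (hQ : (Q : V →ₗ[𝕜] V) * ε = -(ε * Q)) (t : 𝕜) :
    trace 𝕜 V (ε.comp (NormedSpace.exp (t • (Q * Q))) : V →ₗ[𝕜] V) = trace 𝕜 V ε := by
  have : CompleteSpace V := FiniteDimensional.complete 𝕜 V
  let supertrace : (V →L[𝕜] V) →L[𝕜] 𝕜 := LinearMap.toContinuousLinearMap
    (trace 𝕜 V ∘ₗ ContinuousLinearMap.coeLM 𝕜 ∘ₗ LinearMap.mulLeft 𝕜 ε)
  have hvanish (s : 𝕜) : supertrace (NormedSpace.exp (s • (Q * Q)) * (Q * Q)) = 0 := by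
    have hcomm : Commute Q (NormedSpace.exp (s • (Q * Q))) :=
      (((Commute.refl Q).mul_right (Commute.refl Q)).smul_right s).exp_right
    exact trace_mul_mul_mul_self_eq_zero hQ (hcomm.map toLinearMapRingHom)
  simpa [supertrace, Module.End.mul_eq_comp] using supertrace.apply_exp_smul_eq_apply_one hvanish t

/-- finite-dimensional McKean–Singer theorem: Let `V` be a
finite-dimensional complex inner product space with orthogonal decomposition
`V = V₀ ⊕ V₀ᗮ`, grading operator `ε` (identity on `V₀`, minus identity on `V₀ᗮ`),
and `Q` a self-adjoint odd operator.  Then for every real `t`,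
`trace(ε ∘ exp(−t • Q²)) = dim(ker Q ∩ V₀) − dim(ker Q ∩ V₀ᗮ)`. -/
theorem mcKean_singer
    {V : Type*} [NormedAddCommGroup V] [InnerProductSpace ℂ V] [FiniteDimensional ℂ V]
    (V₀ : Submodule ℂ V)
    (Q : V →L[ℂ] V) (hQ : LinearMap.IsSymmetric (Q : V →ₗ[ℂ] V))
    (h0 : ∀ x ∈ V₀, Q x ∈ V₀ᗮ) (h1 : ∀ x ∈ V₀ᗮ, Q x ∈ V₀)
    (ε : V →L[ℂ] V) (hε0 : ∀ x ∈ V₀, ε x = x) (hε1 : ∀ x ∈ V₀ᗮ, ε x = -x)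
    (t : ℝ) :
    LinearMap.trace ℂ V
        ((ε.comp (NormedSpace.exp ((-(t : ℂ)) • (Q.comp Q)))) : V →ₗ[ℂ] V)
      = ((Module.finrank ℂ (LinearMap.ker (Q : V →ₗ[ℂ] V) ⊓ V₀ : Submodule ℂ V) : ℤ)
          - (Module.finrank ℂ (LinearMap.ker (Q : V →ₗ[ℂ] V) ⊓ V₀ᗮ : Submodule ℂ V) : ℤ)
          : ℂ) := by
  have hcompl : IsCompl V₀ V₀ᗮ := V₀.isCompl_orthogonal
  have hanti : (Q : V →ₗ[ℂ] V) * ε = -(ε * Q) :=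
    mul_eq_neg_mul_of_codisjoint hcompl.codisjoint hε0 hε1 h0 h1
  rw [← ContinuousLinearMap.mul_def Q Q, ContinuousLinearMap.trace_comp_exp_smul_mul_self hanti,
    trace_eq_finrank_sub_finrank_of_isCompl hcompl hε0 hε1]
  exact_mod_cast finrank_sub_finrank_eq_of_mapsTo_of_mapsTo hQ.disjoint_ker_range h0 h1
end

section
/- Let V be a finite-dimensional complex inner product space with an orthogonal decomposition V = V₀ ⊕ V₁ (V₁ the orthogonal complement of V₀), grading operator ε (identity on V₀, minus identity on V₁), and let Q : V → V be a self-adjoint odd linear map (Q(V₀) ⊆ V₁ and Q(V₁) ⊆ V₀). Let A : V → V be an even linear map (A(V₀) ⊆ V₀ and A(V₁) ⊆ V₁) that commutes with Q. Then for every real number s, trace(ε ∘ A ∘ exp(−s • Q²)) = trace(ε ∘ A ∘ P), where P is the orthogonal projection of V onto ker Q. In particular trace(ε ∘ A ∘ exp(−s • Q²)) is independent of s. -/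
/-!
Since `Q` is odd, it anticommutes with `ε`; as it also commutes with `A` and with
`exp (-s • Q²)`, the operator `T = ε A exp (-s • Q²)` anticommutes with `Q`. Hence `T` preserves
`ker Q` and `(ker Q)ᗮ = range Q`. On `(ker Q)ᗮ` the restriction of `Q` is invertible and conjugates
`T` to `-T`, so the trace of `T` there vanishes; on `ker Q` the exponential is the identity, so
`T` agrees with `ε A P` there.
-/

open LinearMap Set

theorem LinearMap.trace_eq_zero_of_comp_eq_neg_comp {R M : Type*} [CommRing R] [NoZeroDivisors R]
    [CharZero R] [AddCommGroup M] [Module R M] [Module.Free R M] [Module.Finite R M]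
    {f g : M →ₗ[R] M} (hg : Function.Bijective g) (hfg : g ∘ₗ f = -(f ∘ₗ g)) :
    trace R M f = 0 := by
  let e := LinearEquiv.ofBijective g hg
  have hconj : e.conj f = -f := by
    ext x
    simpa [LinearEquiv.conj_apply, e] using congr($hfg (e.symm x))
  have := trace_conj' f e
  rwa [hconj, map_neg, CharZero.neg_eq_self_iff] at this

theorem LinearMap.comp_eq_neg_comp_of_isCompl {R M : Type*} [Ring R] [AddCommGroup M]
    [Module R M] {p q : Submodule R M} (hpq : IsCompl p q) {ε Q : M →ₗ[R] M}
    (hQp : ∀ x ∈ p, Q x ∈ q) (hQq : ∀ x ∈ q, Q x ∈ p)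
    (hεp : ∀ x ∈ p, ε x = x) (hεq : ∀ x ∈ q, ε x = -x) :
    ε ∘ₗ Q = -(Q ∘ₗ ε) := by
  ext x
  obtain ⟨u, hu, w, hw, rfl⟩ := Submodule.mem_sup.mp (hpq.sup_eq_top ▸ Submodule.mem_top (x := x))
  simp [hεp u hu, hεq w hw, hεq _ (hQp u hu), hεp _ (hQq w hw)]
  abel

theorem ContinuousLinearMap.exp_apply_eq_self_of_apply_eq_zero {𝕂 V : Type*} [RCLike 𝕂]
    [NormedAddCommGroup V] [NormedSpace 𝕂 V] [CompleteSpace V] {N : V →L[𝕂] V} {x : V}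
    (hx : N x = 0) : NormedSpace.exp N x = x := by
  have hsum := (NormedSpace.exp_series_hasSum_exp' (𝕂 := 𝕂) N).mapL (apply 𝕂 V x)
  refine hsum.unique ?_
  convert hasSum_single (f := fun n : ℕ => apply 𝕂 V x ((n.factorial⁻¹ : 𝕂) • N ^ n)) 0 ?_
  · simp
  · intro n hn
    obtain ⟨m, rfl⟩ := Nat.exists_eq_succ_of_ne_zero hn
    simp [pow_succ, hx]

section InnerProductSpace

variable {𝕜 E : Type*} [RCLike 𝕜] [NormedAddCommGroup E] [InnerProductSpace 𝕜 E]

theorem LinearMap.IsSymmetric.mapsTo_orthogonal_ker {Q : E →ₗ[𝕜] E} (hQ : Q.IsSymmetric) :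
    MapsTo Q (ker Q)ᗮ (ker Q)ᗮ := fun x _ k hk => by
  rw [← hQ, mem_ker.mp hk, inner_zero_left]

theorem LinearMap.IsSymmetric.bijective_restrict_orthogonal_ker [FiniteDimensional 𝕜 E]
    {Q : E →ₗ[𝕜] E} (hQ : Q.IsSymmetric) :
    Function.Bijective (Q.restrict hQ.mapsTo_orthogonal_ker) := by
  have hinj : Function.Injective (Q.restrict hQ.mapsTo_orthogonal_ker) := by
    rw [← ker_eq_bot, Submodule.eq_bot_iff]
    rintro ⟨x, hx⟩ hQx
    have hxK : x ∈ ker Q := congr_arg Subtype.val hQx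
    simpa using Submodule.inner_right_of_mem_orthogonal hxK hx
  exact ⟨hinj, injective_iff_surjective.mp hinj⟩

theorem Submodule.trace_comp_starProjection [FiniteDimensional 𝕜 E] (K : Submodule 𝕜 E)
    {T : E →ₗ[𝕜] E} (hT : MapsTo T K K) :
    trace 𝕜 E (T ∘ₗ K.starProjection) = trace 𝕜 K (T.restrict hT) := by
  rw [← trace_restrict_eq_of_forall_mem K (T ∘ₗ K.starProjection)
    fun x => hT (K.starProjection_apply_mem x)]
  congr 1
  ext x
  simp [starProjection_eq_self_iff.mpr x.2]
  rfl

theorem LinearMap.IsSymmetric.trace_eq_trace_comp_starProjection_ker [FiniteDimensional 𝕜 E]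
    {Q T : E →ₗ[𝕜] E} (hQ : Q.IsSymmetric) (hTQ : T ∘ₗ Q = -(Q ∘ₗ T)) :
    trace 𝕜 E T = trace 𝕜 E (T ∘ₗ (ker Q).starProjection) := by
  have hTK : MapsTo T (ker Q)ᗮ (ker Q)ᗮ := by
    rw [← hQ.orthogonal_range, Submodule.orthogonal_orthogonal]
    rintro _ ⟨y, rfl⟩
    exact ⟨-T y, by simpa using congr($hTQ.symm y)⟩
  have hrestrict : Q.restrict hQ.mapsTo_orthogonal_ker ∘ₗ T.restrict hTK =
      -(T.restrict hTK ∘ₗ Q.restrict hQ.mapsTo_orthogonal_ker) := by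
    ext x
    change Q (T x) = -T (Q x)
    exact neg_eq_iff_eq_neg.mp congr($hTQ x).symm
  have hsplit : T = T ∘ₗ (ker Q).starProjection + T ∘ₗ (ker Q)ᗮ.starProjection := by
    ext x
    simp
  conv_lhs => rw [hsplit]
  rw [map_add, (ker Q)ᗮ.trace_comp_starProjection hTK,
    trace_eq_zero_of_comp_eq_neg_comp hQ.bijective_restrict_orthogonal_ker hrestrict, add_zero]

end InnerProductSpace

theorem mcKean_singer_with_even_symmetry_general
    {V : Type*} [NormedAddCommGroup V] [InnerProductSpace ℂ V] [FiniteDimensional ℂ V]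
    (V₀ : Submodule ℂ V)
    (Q : V →L[ℂ] V) (hQ : LinearMap.IsSymmetric (Q : V →ₗ[ℂ] V))
    (h0 : ∀ x ∈ V₀, Q x ∈ V₀ᗮ) (h1 : ∀ x ∈ V₀ᗮ, Q x ∈ V₀)
    (ε : V →L[ℂ] V) (hε0 : ∀ x ∈ V₀, ε x = x) (hε1 : ∀ x ∈ V₀ᗮ, ε x = -x)
    (A : V →L[ℂ] V)
    (hAQ : A.comp Q = Q.comp A)
    (P : V →L[ℂ] V)
    (hP : P = (LinearMap.ker (Q : V →ₗ[ℂ] V)).subtypeL.comp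
        ((LinearMap.ker (Q : V →ₗ[ℂ] V)).orthogonalProjectionOnto))
    (s : ℝ) :
    LinearMap.trace ℂ V
        ((ε.comp (A.comp (NormedSpace.exp ((-(s : ℂ)) • (Q.comp Q))))) : V →ₗ[ℂ] V)
      = LinearMap.trace ℂ V ((ε.comp (A.comp P)) : V →ₗ[ℂ] V) := by
  set E := NormedSpace.exp ((-(s : ℂ)) • (Q.comp Q))
  set K := ker (Q : V →ₗ[ℂ] V)
  replace hP : P = K.starProjection := hP
  subst hP
  have hεQ (x : V) : ε (Q x) = -Q (ε x) :=
    congr($(comp_eq_neg_comp_of_isCompl (ε := ε) (Q := Q) V₀.isCompl_orthogonal h0 h1 hε0 hε1) x)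
  replace hAQ (x : V) : A (Q x) = Q (A x) := congr($hAQ x)
  have hQE (x : V) : Q (E x) = E (Q x) :=
    congr($((((Commute.refl Q).mul_right (Commute.refl Q)).smul_right _).exp_right.eq) x)
  have hanti : ((ε.comp (A.comp E) : V →L[ℂ] V) : V →ₗ[ℂ] V) ∘ₗ (Q : V →ₗ[ℂ] V) =
      -((Q : V →ₗ[ℂ] V) ∘ₗ (ε.comp (A.comp E) : V →L[ℂ] V)) := by
    ext x
    simp [← hQE, hAQ, hεQ]
  have hEP (x : V) : E (K.starProjection x) = K.starProjection x := by
    have hQx : Q (K.starProjection x) = 0 := K.starProjection_apply_mem x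
    exact ContinuousLinearMap.exp_apply_eq_self_of_apply_eq_zero (by simp [hQx])
  rw [hQ.trace_eq_trace_comp_starProjection_ker hanti]
  congr 1
  ext x
  exact congr(ε (A $(hEP x)))

/-- generalized McKean–Singer: Let `V` be a finite-dimensional complex
inner product space with orthogonal decomposition `V = V₀ ⊕ V₀ᗮ`, grading operator `ε`,
`Q` a self-adjoint odd operator, and `A` an even operator commuting with `Q`.  Then for
every real `s`, `trace(ε ∘ A ∘ exp(−s • Q²)) = trace(ε ∘ A ∘ P)` where `P` is the
orthogonal projection onto `ker Q`. -/
theorem mcKean_singer_with_even_symmetry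
    {V : Type*} [NormedAddCommGroup V] [InnerProductSpace ℂ V] [FiniteDimensional ℂ V]
    (V₀ : Submodule ℂ V)
    (Q : V →L[ℂ] V) (hQ : LinearMap.IsSymmetric (Q : V →ₗ[ℂ] V))
    (h0 : ∀ x ∈ V₀, Q x ∈ V₀ᗮ) (h1 : ∀ x ∈ V₀ᗮ, Q x ∈ V₀)
    (ε : V →L[ℂ] V) (hε0 : ∀ x ∈ V₀, ε x = x) (hε1 : ∀ x ∈ V₀ᗮ, ε x = -x)
    (A : V →L[ℂ] V) (hA0 : ∀ x ∈ V₀, A x ∈ V₀) (hA1 : ∀ x ∈ V₀ᗮ, A x ∈ V₀ᗮ)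
    (hAQ : A.comp Q = Q.comp A)
    (P : V →L[ℂ] V)
    (hP : P = (LinearMap.ker (Q : V →ₗ[ℂ] V)).subtypeL.comp
        ((LinearMap.ker (Q : V →ₗ[ℂ] V)).orthogonalProjectionOnto))
    (s : ℝ) :
    LinearMap.trace ℂ V
        ((ε.comp (A.comp (NormedSpace.exp ((-(s : ℂ)) • (Q.comp Q))))) : V →ₗ[ℂ] V)
      = LinearMap.trace ℂ V ((ε.comp (A.comp P)) : V →ₗ[ℂ] V) :=
  mcKean_singer_with_even_symmetry_general V₀ Q hQ h0 h1 ε hε0 hε1 A hAQ P hP s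
end

section
/- Let A be a ring, E ⊆ A a subring, and N ⊆ A an additive subgroup such that θ² = 0 for every θ ∈ N and θ·η ∈ E for all θ, η ∈ N. Then the set E × N equipped with the multiplication (t, θ) · (s, η) := (t + s + θη, θ + η) is a group, with identity element (0, 0) and with the inverse of (t, θ) given by (−t, −θ). -/
/-- The super Euclidean multiplication `(t, θ) · (s, η) := (t + s + θη, θ + η)` on
pairs of an even element `t ∈ E` and an odd element `θ ∈ N`. -/
def superEucMul₁ {A : Type*} [Ring A] (E : Subring A) (N : AddSubgroup A)
    (hmul : ∀ θ ∈ N, ∀ η ∈ N, θ * η ∈ E) : E × N → E × N → E × N :=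
  fun p q =>
    (p.1 + q.1 + ⟨(p.2 : A) * (q.2 : A), hmul _ p.2.2 _ q.2.2⟩, p.2 + q.2)

section SuperEuclidean

variable {A : Type*} [Ring A] {E : Subring A} {N : AddSubgroup A}
  {hmul : ∀ θ ∈ N, ∀ η ∈ N, θ * η ∈ E}

@[simp]
lemma coe_superEucMul₁_fst (p q : E × N) :
    ((superEucMul₁ E N hmul p q).1 : A) = p.1 + q.1 + p.2 * q.2 :=
  rfl

@[simp]
lemma superEucMul₁_snd (p q : E × N) : (superEucMul₁ E N hmul p q).2 = p.2 + q.2 :=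
  rfl

lemma superEucMul₁_ext {p q : E × N} (h₁ : (p.1 : A) = q.1) (h₂ : (p.2 : A) = q.2) : p = q :=
  Prod.ext (Subtype.ext h₁) (Subtype.ext h₂)

lemma superEucMul₁_assoc (p q r : E × N) :
    superEucMul₁ E N hmul (superEucMul₁ E N hmul p q) r
      = superEucMul₁ E N hmul p (superEucMul₁ E N hmul q r) := by
  apply superEucMul₁_ext
  · simp only [coe_superEucMul₁_fst, superEucMul₁_snd, AddSubgroup.coe_add]
    noncomm_ring
  · simp only [superEucMul₁_snd, add_assoc]

lemma superEucMul₁_zero_left (p : E × N) : superEucMul₁ E N hmul (0, 0) p = p :=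
  superEucMul₁_ext (by simp) (by simp)

lemma superEucMul₁_zero_right (p : E × N) : superEucMul₁ E N hmul p (0, 0) = p :=
  superEucMul₁_ext (by simp) (by simp)

lemma superEucMul₁_neg_right (p : E × N) (hp : (p.2 : A) * p.2 = 0) :
    superEucMul₁ E N hmul p (-p.1, -p.2) = (0, 0) :=
  superEucMul₁_ext (by simp [hp]) (by simp)

lemma superEucMul₁_neg_left (p : E × N) (hp : (p.2 : A) * p.2 = 0) :
    superEucMul₁ E N hmul (-p.1, -p.2) p = (0, 0) :=
  superEucMul₁_ext (by simp [hp]) (by simp)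

end SuperEuclidean

/-- If every `θ ∈ N` satisfies `θ² = 0` and products of elements of `N`
lie in `E`, then `E × N` with multiplication `(t, θ)·(s, η) = (t + s + θη, θ + η)` is a
group with identity `(0, 0)` and inverse `(t, θ)⁻¹ = (−t, −θ)`. -/
theorem superEucMul₁_group {A : Type*} [Ring A] (E : Subring A) (N : AddSubgroup A)
    (hsq : ∀ θ ∈ N, θ * θ = 0) (hmul : ∀ θ ∈ N, ∀ η ∈ N, θ * η ∈ E) :
    (∀ p q r : E × N,
        superEucMul₁ E N hmul (superEucMul₁ E N hmul p q) r
          = superEucMul₁ E N hmul p (superEucMul₁ E N hmul q r)) ∧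
    (∀ p : E × N, superEucMul₁ E N hmul ((0 : E), (0 : N)) p = p) ∧
    (∀ p : E × N, superEucMul₁ E N hmul p ((0 : E), (0 : N)) = p) ∧
    (∀ p : E × N,
        superEucMul₁ E N hmul p (-p.1, -p.2) = ((0 : E), (0 : N)) ∧
        superEucMul₁ E N hmul (-p.1, -p.2) p = ((0 : E), (0 : N))) :=
  ⟨superEucMul₁_assoc, superEucMul₁_zero_left, superEucMul₁_zero_right, fun p =>
    ⟨superEucMul₁_neg_right p (hsq _ p.2.2), superEucMul₁_neg_left p (hsq _ p.2.2)⟩⟩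
end
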